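/- Let R be a semihyperring with a multiplicative identity 1. Then every maximal hyperideal M of R (i.e., M is a proper hyperideal and there is no hyperideal J with M ⊊ J ⊊ R) is a prime hyperideal of R. -/
import Mathlib


/-- A semihyperring `(R, +, ·, 0)`: `+` is a hyperoperation (into nonempty sets),
`·` is an associative single-valued multiplication distributing over `+`,
and `0` is an additive identity and multiplicative absorbing element. -/
class Semihyperring (R : Type*) extends Mul R, Zero R where
  /-- hyperaddition -/
  hadd : R → R → Set R
  hadd_nonempty : ∀ a b : R, (hadd a b).Nonempty
  hadd_comm : ∀ a b : R, hadd a b = hadd b a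
  hadd_assoc : ∀ a b c : R, (⋃ x ∈ hadd a b, hadd x c) = ⋃ x ∈ hadd b c, hadd a x
  hadd_zero : ∀ a : R, hadd a 0 = {a}
  mul_assoc' : ∀ a b c : R, a * b * c = a * (b * c)
  left_distrib' : ∀ a b c : R, (fun x => a * x) '' hadd b c = hadd (a * b) (a * c)
  right_distrib' : ∀ a b c : R, (fun x => x * c) '' hadd a b = hadd (a * c) (b * c)
  mul_zero' : ∀ a : R, a * 0 = 0
  zero_mul' : ∀ a : R, 0 * a = 0

namespace Semihyperring

variable {R : Type*} [Semihyperring R]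

/-- Hyperaddition extended to sets: `A + B = ⋃_{a∈A, b∈B} (a + b)`. -/
def hAddSet (A B : Set R) : Set R := ⋃ a ∈ A, ⋃ b ∈ B, hadd a b

/-- The hypersum `x₁ + x₂ + ⋯ + xₙ` of a list of elements (as a set);
the empty hypersum is `{0}`, so `hSum [x] = {x}`. -/
def hSum : List R → Set R
  | [] => {0}
  | x :: xs => hAddSet {x} (hSum xs)

/-- A left hyperideal. -/
def IsLeftHyperideal (I : Set R) : Prop :=
  I.Nonempty ∧ (∀ a ∈ I, ∀ b ∈ I, hadd a b ⊆ I) ∧ ∀ a ∈ I, ∀ r : R, r * a ∈ I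

/-- A right hyperideal. -/
def IsRightHyperideal (I : Set R) : Prop :=
  I.Nonempty ∧ (∀ a ∈ I, ∀ b ∈ I, hadd a b ⊆ I) ∧ ∀ a ∈ I, ∀ r : R, a * r ∈ I

/-- A (two-sided) hyperideal. -/
def IsHyperideal (I : Set R) : Prop :=
  I.Nonempty ∧ (∀ a ∈ I, ∀ b ∈ I, hadd a b ⊆ I) ∧ ∀ a ∈ I, ∀ r : R, r * a ∈ I ∧ a * r ∈ I

/-- The product `HK`: union of all finite hypersums `a₁·b₁ + ⋯ + aₙ·bₙ` (n ≥ 1)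
with `aᵢ ∈ H`, `bᵢ ∈ K`. -/
def hProd (H K : Set R) : Set R :=
  ⋃ (l : List (R × R)) (_ : l ≠ []) (_ : ∀ p ∈ l, p.1 ∈ H ∧ p.2 ∈ K),
    hSum (l.map fun p => p.1 * p.2)

/-- The hyperideal generated by an element. -/
def genHyperideal (a : R) : Set R := ⋂₀ {I : Set R | IsHyperideal I ∧ a ∈ I}

/-- A prime hyperideal. -/
def IsPrimeHyperideal (P : Set R) : Prop :=
  IsHyperideal P ∧
    ∀ A B : Set R, IsHyperideal A → IsHyperideal B → hProd A B ⊆ P → A ⊆ P ∨ B ⊆ P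

/-- A semiprime hyperideal. -/
def IsSemiprimeHyperideal (I : Set R) : Prop :=
  IsHyperideal I ∧ ∀ H : Set R, IsHyperideal H → hProd H H ⊆ I → H ⊆ I

/-- A strongly irreducible hyperideal. -/
def IsStronglyIrreducibleHyperideal (I : Set R) : Prop :=
  IsHyperideal I ∧
    ∀ H K : Set R, IsHyperideal H → IsHyperideal K → H ∩ K ⊆ I → H ⊆ I ∨ K ⊆ I

/-- An irreducible hyperideal. -/
def IsIrreducibleHyperideal (I : Set R) : Prop :=
  IsHyperideal I ∧
    ∀ H K : Set R, IsHyperideal H → IsHyperideal K → I = H ∩ K → I = H ∨ I = K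

/-- `a·R`: the union of all finite hypersums `a·r₁ + ⋯ + a·rₙ` (n ≥ 1) with `rᵢ ∈ R`. -/
def rightMulSet (a : R) : Set R :=
  ⋃ (l : List R) (_ : l ≠ []), hSum (l.map fun r => a * r)

end Semihyperring

open Semihyperring


section Aux

variable {R : Type*} [Semihyperring R]

lemma zero_mem_of_hyperideal {I : Set R} (hI : IsHyperideal I) : (0 : R) ∈ I := by
  obtain ⟨⟨a, ha⟩, _, hmul⟩ := hI
  have h := (hmul a ha 0).2
  rwa [Semihyperring.mul_zero'] at h

lemma hSum_singleton (x : R) : hSum [x] = {x} := by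
  simp [hSum, hAddSet, Semihyperring.hadd_zero]

lemma hSum_subset_of_hyperideal {I : Set R} (hI : IsHyperideal I) :
    ∀ l : List R, (∀ x ∈ l, x ∈ I) → hSum l ⊆ I := by
  intro l
  induction l with
  | nil =>
    intro _ y hy
    simp only [hSum, Set.mem_singleton_iff] at hy
    subst hy; exact zero_mem_of_hyperideal hI
  | cons x xs ih =>
    intro hmem y hy
    simp only [hSum, hAddSet, Set.mem_iUnion, Set.mem_singleton_iff] at hy
    obtain ⟨a, rfl, b, hb, hyab⟩ := hy
    exact hI.2.1 a (hmem a (by simp)) b (ih (fun z hz => hmem z (by simp [hz])) hb) hyab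

lemma image_mul_right_hSum (b : R) :
    ∀ l : List R, (fun x => x * b) '' hSum l = hSum (l.map fun x => x * b) := by
  intro l
  induction l with
  | nil => simp [hSum, Semihyperring.zero_mul']
  | cons x xs ih =>
    simp only [hSum, List.map_cons, hAddSet, Set.mem_singleton_iff, Set.iUnion_iUnion_eq_left,
      Set.image_iUnion]
    rw [← ih]
    ext y
    simp only [Set.mem_iUnion, Set.mem_image]
    constructor
    · rintro ⟨c, hc, z, hz, rfl⟩
      refine ⟨c * b, ⟨c, hc, rfl⟩, ?_⟩
      rw [← Semihyperring.right_distrib' x c b]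
      exact ⟨z, hz, rfl⟩
    · rintro ⟨d, ⟨c, hc, rfl⟩, hy⟩
      rw [← Semihyperring.right_distrib' x c b] at hy
      obtain ⟨z, hz, rfl⟩ := hy
      exact ⟨c, hc, z, hz, rfl⟩

lemma image_mul_left_hSum (b : R) :
    ∀ l : List R, (fun x => b * x) '' hSum l = hSum (l.map fun x => b * x) := by
  intro l
  induction l with
  | nil => simp [hSum, Semihyperring.mul_zero']
  | cons x xs ih =>
    simp only [hSum, List.map_cons, hAddSet, Set.mem_singleton_iff, Set.iUnion_iUnion_eq_left,
      Set.image_iUnion]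
    rw [← ih]
    ext y
    simp only [Set.mem_iUnion, Set.mem_image]
    constructor
    · rintro ⟨c, hc, z, hz, rfl⟩
      refine ⟨b * c, ⟨c, hc, rfl⟩, ?_⟩
      rw [← Semihyperring.left_distrib' b x c]
      exact ⟨z, hz, rfl⟩
    · rintro ⟨d, ⟨c, hc, rfl⟩, hy⟩
      rw [← Semihyperring.left_distrib' b x c] at hy
      obtain ⟨z, hz, rfl⟩ := hy
      exact ⟨c, hc, z, hz, rfl⟩

lemma hadd_hSum_subset :
    ∀ (l1 l2 : List R) (u v : R), u ∈ hSum l1 → v ∈ hSum l2 →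
      hadd u v ⊆ hSum (l1 ++ l2) := by
  intro l1
  induction l1 with
  | nil =>
    intro l2 u v hu hv
    simp only [hSum, Set.mem_singleton_iff] at hu
    subst hu
    rw [Semihyperring.hadd_comm, Semihyperring.hadd_zero]
    intro z hz
    simp only [Set.mem_singleton_iff] at hz
    subst hz
    simpa using hv
  | cons x xs ih =>
    intro l2 u v hu hv z hz
    simp only [hSum, hAddSet, Set.mem_iUnion, Set.mem_singleton_iff] at hu
    obtain ⟨a, rfl, w, hw, huw⟩ := hu
    have h1 : z ∈ ⋃ p ∈ hadd a w, hadd p v := by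
      exact Set.mem_iUnion₂.2 ⟨u, huw, hz⟩
    rw [Semihyperring.hadd_assoc] at h1
    obtain ⟨t, ht, hzt⟩ := Set.mem_iUnion₂.1 h1
    have ht' : t ∈ hSum (xs ++ l2) := ih l2 w v hw hv ht
    show z ∈ hSum ((a :: xs) ++ l2)
    simp only [List.cons_append, hSum, hAddSet, Set.mem_iUnion, Set.mem_singleton_iff]
    exact ⟨a, rfl, t, ht', hzt⟩

lemma mul_mem_hProd {A B : Set R} {a b : R} (ha : a ∈ A) (hb : b ∈ B) :
    a * b ∈ hProd A B := by
  simp only [hProd, Set.mem_iUnion]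
  refine ⟨[(a, b)], by simp, by simp [ha, hb], ?_⟩
  simp [hSum_singleton]

end Aux

/-- every maximal hyperideal of a semihyperring with identity is prime. -/
theorem maximal_hyperideal_isPrime {R : Type*} [Semihyperring R]
    (one : R) (hone : ∀ x : R, one * x = x ∧ x * one = x)
    (M : Set R) (hM : IsHyperideal M) (hproper : M ≠ Set.univ)
    (hmax : ¬ ∃ J : Set R, IsHyperideal J ∧ M ⊂ J ∧ J ⊂ Set.univ) :
    IsPrimeHyperideal M := by
  refine ⟨hM, ?_⟩
  intro A B hA hB hAB
  by_contra hcon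
  push_neg at hcon
  obtain ⟨hAnM, hBnM⟩ := hcon
  obtain ⟨a0, ha0A, ha0M⟩ := Set.not_subset.1 hAnM
  obtain ⟨b0, hb0B, hb0M⟩ := Set.not_subset.1 hBnM
  -- J : hyperideal generated by M ∪ A
  set J : Set R :=
    ⋃ (l : List R) (_ : ∀ x ∈ l, x ∈ M ∪ A), hSum l with hJdef
  have hmemJ : ∀ y, y ∈ J ↔ ∃ l : List R, (∀ x ∈ l, x ∈ M ∪ A) ∧ y ∈ hSum l := by
    intro y; simp [hJdef, Set.mem_iUnion]
  have hsubJ : ∀ x ∈ M ∪ A, x ∈ J := by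
    intro x hx
    exact (hmemJ x).2 ⟨[x], by simpa using hx, by simp [hSum_singleton]⟩
  have hJideal : IsHyperideal J := by
    refine ⟨⟨a0, hsubJ a0 (Or.inr ha0A)⟩, ?_, ?_⟩
    · intro u hu v hv
      obtain ⟨l1, hl1, hu1⟩ := (hmemJ u).1 hu
      obtain ⟨l2, hl2, hv2⟩ := (hmemJ v).1 hv
      intro z hz
      refine (hmemJ z).2 ⟨l1 ++ l2, ?_, hadd_hSum_subset l1 l2 u v hu1 hv2 hz⟩
      intro x hx
      rcases List.mem_append.1 hx with h | h
      · exact hl1 x h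
      · exact hl2 x h
    · intro u hu r
      obtain ⟨l, hl, hu1⟩ := (hmemJ u).1 hu
      constructor
      · refine (hmemJ (r * u)).2 ⟨l.map (fun x => r * x), ?_, ?_⟩
        · intro x hx
          obtain ⟨y, hy, rfl⟩ := List.mem_map.1 hx
          rcases hl y hy with h | h
          · exact Or.inl (hM.2.2 y h r).1
          · exact Or.inr (hA.2.2 y h r).1
        · rw [← image_mul_left_hSum]
          exact ⟨u, hu1, rfl⟩
      · refine (hmemJ (u * r)).2 ⟨l.map (fun x => x * r), ?_, ?_⟩
        · intro x hx
          obtain ⟨y, hy, rfl⟩ := List.mem_map.1 hx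
          rcases hl y hy with h | h
          · exact Or.inl (hM.2.2 y h r).2
          · exact Or.inr (hA.2.2 y h r).2
        · rw [← image_mul_right_hSum]
          exact ⟨u, hu1, rfl⟩
  have hMJ : M ⊂ J := by
    refine ⟨fun x hx => hsubJ x (Or.inl hx), fun hJM => ha0M (hJM (hsubJ a0 (Or.inr ha0A)))⟩
  have hJuniv : J = Set.univ := by
    by_contra hne
    exact hmax ⟨J, hJideal, hMJ, ⟨Set.subset_univ J, fun h => hne (Set.eq_univ_of_univ_subset h)⟩⟩
  -- one ∈ J
  have hone_mem : one ∈ J := hJuniv ▸ Set.mem_univ one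
  obtain ⟨l, hl, honel⟩ := (hmemJ one).1 hone_mem
  -- b0 = one * b0 ∈ hSum (l.map (· * b0)) ⊆ M
  have hb0 : b0 ∈ hSum (l.map fun x => x * b0) := by
    rw [← image_mul_right_hSum]
    exact ⟨one, honel, (hone b0).1⟩
  have : b0 ∈ M := by
    refine hSum_subset_of_hyperideal hM _ ?_ hb0
    intro x hx
    obtain ⟨y, hy, rfl⟩ := List.mem_map.1 hx
    rcases hl y hy with h | h
    · exact (hM.2.2 y h b0).2
    · exact hAB (mul_mem_hProd h hb0B)
  exact hb0M this
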